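/- Let 𝒟 ⊆ 𝒞 be subcategories of 𝓑 satisfying condition (RCP) and suppose Ext²(C,D) = 0 for all C ∈ 𝒞 and D ∈ 𝒟. Then the right 𝒟-mutation 𝒞' := CoCone(𝒟,𝒞) ∩ 𝒟^⊥¹ is rigid, i.e. Ext¹(C'₁, C'₂) = 0 for all C'₁, C'₂ ∈ 𝒞'. -/

import Mathlib

open CategoryTheory Category Limits ZeroObject

universe v u

namespace CotorsionPaper

variable {B : Type u} [Category.{v} B] [Abelian B]

/-- `f, g` form a short exact sequence `0 → X → Y → Z → 0`. -/
def IsSES {X Y Z : B} (f : X ⟶ Y) (g : Y ⟶ Z) : Prop :=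
  ∃ w : f ≫ g = 0, (ShortComplex.mk f g w).ShortExact

/-- `Ext¹(X, Y) = 0`: every short exact sequence `0 → Y → E → X → 0` splits. -/
def Ext1Zero (X Y : B) : Prop :=
  ∀ ⦃E : B⦄ (i : Y ⟶ E) (p : E ⟶ X), IsSES i p → ∃ s : X ⟶ E, s ≫ p = 𝟙 X

/-- `Ext²(X, Y) = 0`, via dimension shifting: `Ext¹(K, Y) = 0` for any syzygy `K` of `X`. -/
def Ext2Zero (X Y : B) : Prop :=
  ∀ ⦃K P : B⦄ (i : K ⟶ P) (p : P ⟶ X), Projective P → IsSES i p → Ext1Zero K Y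

/-- A (strictly) full additive subcategory: closed under isomorphisms,
contains a zero object and is closed under finite direct sums. -/
structure AddSubcat (S : Set B) : Prop where
  zero_mem : (0 : B) ∈ S
  iso_closed : ∀ ⦃X Y : B⦄, (X ≅ Y) → X ∈ S → Y ∈ S
  sum_closed : ∀ ⦃X Y : B⦄, X ∈ S → Y ∈ S → (X ⊞ Y) ∈ S

/-- `S` is closed under direct summands (retracts). -/
def ClosedUnderSummands (S : Set B) : Prop :=
  ∀ ⦃X Y : B⦄ (r : X ⟶ Y) (s : Y ⟶ X), s ≫ r = 𝟙 Y → X ∈ S → Y ∈ S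

/-- `S` is rigid: `Ext¹(X, Y) = 0` for all `X, Y ∈ S`. -/
def Rigid (S : Set B) : Prop :=
  ∀ ⦃X⦄, X ∈ S → ∀ ⦃Y⦄, Y ∈ S → Ext1Zero X Y

/-- `S^⊥¹`. -/
def rightPerp (S : Set B) : Set B := {Y | ∀ ⦃X⦄, X ∈ S → Ext1Zero X Y}

/-- `^⊥¹S`. -/
def leftPerp (S : Set B) : Set B := {X | ∀ ⦃Y⦄, Y ∈ S → Ext1Zero X Y}

/-- `f : X ⟶ A` is a right `S`-approximation of `A`. -/
def IsRightApprox (S : Set B) {X A : B} (f : X ⟶ A) : Prop :=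
  X ∈ S ∧ ∀ ⦃X' : B⦄, X' ∈ S → ∀ g : X' ⟶ A, ∃ h : X' ⟶ X, h ≫ f = g

def ContravariantlyFinite (S : Set B) : Prop :=
  ∀ A : B, ∃ (X : B) (f : X ⟶ A), IsRightApprox S f

/-- `f : A ⟶ X` is a left `S`-approximation of `A`. -/
def IsLeftApprox (S : Set B) {A X : B} (f : A ⟶ X) : Prop :=
  X ∈ S ∧ ∀ ⦃X' : B⦄, X' ∈ S → ∀ g : A ⟶ X', ∃ h : X ⟶ X', f ≫ h = g

def CovariantlyFinite (S : Set B) : Prop :=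
  ∀ A : B, ∃ (X : B) (f : A ⟶ X), IsLeftApprox S f

/-- `(U, V)` is a cotorsion pair. -/
structure CotorsionPair (U V : Set B) : Prop where
  summands_left : ClosedUnderSummands U
  summands_right : ClosedUnderSummands V
  ext : ∀ ⦃X⦄, X ∈ U → ∀ ⦃Y⦄, Y ∈ V → Ext1Zero X Y
  resol : ∀ X : B, ∃ (VX UX : B) (i : VX ⟶ UX) (p : UX ⟶ X),
    VX ∈ V ∧ UX ∈ U ∧ IsSES i p
  coresol : ∀ X : B, ∃ (VX UX : B) (i : X ⟶ VX) (p : VX ⟶ UX),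
    VX ∈ V ∧ UX ∈ U ∧ IsSES i p

/-- `CoCone(S, T)`. -/
def CoCone (S T : Set B) : Set B :=
  {X | ∃ (B' B'' : B) (i : X ⟶ B') (p : B' ⟶ B''), B' ∈ S ∧ B'' ∈ T ∧ IsSES i p}

/-- `Cone(S, T)`. -/
def Cone (S T : Set B) : Set B :=
  {X | ∃ (B' B'' : B) (i : B' ⟶ B'') (p : B'' ⟶ X), B' ∈ S ∧ B'' ∈ T ∧ IsSES i p}

/-- The subcategory `𝒫` of projective objects. -/
def projSet : Set B := {P | Projective P}

/-- The subcategory `ℐ` of injective objects. -/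
def injSet : Set B := {I | Injective I}

/-- `Ω𝒞`, the (first) syzygy of `𝒞`. -/
def Syz (C : Set B) : Set B := CoCone projSet C

/-- Condition (RCP): `𝒫 ⊆ 𝒞`, `𝒞` rigid, contravariantly finite,
closed under direct summands (and a full additive subcategory). -/
structure RCP (C : Set B) : Prop where
  add : AddSubcat C
  proj_mem : ∀ ⦃P : B⦄, Projective P → P ∈ C
  rigid : Rigid C
  contra : ContravariantlyFinite C
  summands : ClosedUnderSummands C

/-- `f` factors through an object of `S`. -/
def FactorsThru (S : Set B) {X Y : B} (f : X ⟶ Y) : Prop :=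
  ∃ (Z : B) (g : X ⟶ Z) (h : Z ⟶ Y), Z ∈ S ∧ g ≫ h = f

/-- The ideal of morphisms of the full subcategory on `H` factoring through an object of `S`. -/
def idealRel (H S : Set B) : HomRel (ObjectProperty.FullSubcategory (fun X : B => X ∈ H)) :=
  fun X Y f g => FactorsThru S (show X.obj ⟶ Y.obj from f.hom - g.hom)

/-- The ideal quotient `H/S`. -/
abbrev HeartCat (H S : Set B) := CategoryTheory.Quotient (idealRel H S)

/-- The quotient functor `H → H/S`. -/
abbrev heartQ (H S : Set B) : ObjectProperty.FullSubcategory (fun X : B => X ∈ H) ⥤ HeartCat H S :=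
  CategoryTheory.Quotient.functor _

/-- The zero morphism in the ideal quotient `H/S`. -/
def heartZero (H S : Set B) (X Y : HeartCat H S) : X ⟶ Y :=
  (heartQ H S).map (0 : X.as ⟶ Y.as)

/-- `κ` is a kernel of `φ` in the ideal quotient `H/S`. -/
structure IsKernelArrow {H S : Set B} {K X Y : HeartCat H S}
    (κ : K ⟶ X) (φ : X ⟶ Y) : Prop where
  w : κ ≫ φ = heartZero H S K Y
  lift : ∀ ⦃T : HeartCat H S⦄ (t : T ⟶ X), t ≫ φ = heartZero H S T Y →
    ∃! u : T ⟶ K, u ≫ κ = t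

/-- `π` is a cokernel of `φ` in the ideal quotient `H/S`. -/
structure IsCokernelArrow {H S : Set B} {X Y Q : HeartCat H S}
    (φ : X ⟶ Y) (π : Y ⟶ Q) : Prop where
  w : φ ≫ π = heartZero H S X Q
  desc : ∀ ⦃T : HeartCat H S⦄ (t : Y ⟶ T), φ ≫ t = heartZero H S X T →
    ∃! u : Q ⟶ T, π ≫ u = t

/-- The class of epimorphisms in `H/S` whose kernel object lies in `A`. -/
def epiClassWithKernelIn (H S A : Set B) : MorphismProperty (HeartCat H S) :=
  fun X Y φ => Epi φ ∧ ∃ (K : HeartCat H S) (κ : K ⟶ X),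
    K.as.obj ∈ A ∧ IsKernelArrow κ φ

/-- The class of monomorphisms in `H/S` whose cokernel object lies in `A`. -/
def monoClassWithCokernelIn (H S A : Set B) : MorphismProperty (HeartCat H S) :=
  fun X Y φ => Mono φ ∧ ∃ (Q : HeartCat H S) (π : Y ⟶ Q),
    Q.as.obj ∈ A ∧ IsCokernelArrow φ π

/-- The diagram `(⋄)` associated with a morphism `f : Y ⟶ X`. -/
structure DiamondDiagram {Y X : B} (f : Y ⟶ X) {OmX PX Z₁ IY SgY Z₂ : B}
    (q : OmX ⟶ PX) (p : PX ⟶ X) (j : OmX ⟶ Z₁) (g : Z₁ ⟶ Y)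
    (i : Y ⟶ IY) (c : IY ⟶ SgY) (h : X ⟶ Z₂) (e : Z₂ ⟶ SgY)
    (u : Z₁ ⟶ PX) (v : IY ⟶ Z₂) : Prop where
  projPX : Projective PX
  injIY : Injective IY
  ses_proj : IsSES q p
  ses_pullback : IsSES j g
  ses_inj : IsSES i c
  ses_pushout : IsSES h e
  comm₁ : j ≫ u = q
  comm₂ : u ≫ p = g ≫ f
  comm₃ : f ≫ h = i ≫ v
  comm₄ : v ≫ e = c

/-- The class of morphisms `f : Y ⟶ X` admitting a diagram `(⋄)` with
`Z₁ ∈ ZCond` and `h` factoring through an object of `HCond`. -/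
def Rclass (ZCond HCond : Set B) : MorphismProperty B :=
  fun Y X f => ∃ (OmX PX Z₁ IY SgY Z₂ : B) (q : OmX ⟶ PX) (p : PX ⟶ X)
    (j : OmX ⟶ Z₁) (g : Z₁ ⟶ Y) (i : Y ⟶ IY) (c : IY ⟶ SgY)
    (h : X ⟶ Z₂) (e : Z₂ ⟶ SgY) (u : Z₁ ⟶ PX) (v : IY ⟶ Z₂),
    DiamondDiagram f q p j g i c h e u v ∧ Z₁ ∈ ZCond ∧ FactorsThru HCond h

/-- The class of morphisms `f : Y ⟶ X` admitting a diagram `(⋄)` with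
`g` factoring through an object of `GCond` and `h` through an object of `HCond`. -/
def RtildeClass (GCond HCond : Set B) : MorphismProperty B :=
  fun Y X f => ∃ (OmX PX Z₁ IY SgY Z₂ : B) (q : OmX ⟶ PX) (p : PX ⟶ X)
    (j : OmX ⟶ Z₁) (g : Z₁ ⟶ Y) (i : Y ⟶ IY) (c : IY ⟶ SgY)
    (h : X ⟶ Z₂) (e : Z₂ ⟶ SgY) (u : Z₁ ⟶ PX) (v : IY ⟶ Z₂),
    DiamondDiagram f q p j g i c h e u v ∧ FactorsThru GCond g ∧ FactorsThru HCond h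

/-- The objects of the heart `ℋ` of a cotorsion pair `(U, V)`. -/
def HeartObjects (U V : Set B) : Set B :=
  {X | (∃ (VX UX : B) (i : VX ⟶ UX) (p : UX ⟶ X),
          IsSES i p ∧ VX ∈ V ∧ UX ∈ U ∩ V) ∧
       (∃ (VX UX : B) (i : X ⟶ VX) (p : VX ⟶ UX),
          IsSES i p ∧ VX ∈ U ∩ V ∧ UX ∈ U)}


/-!
Write `0 → X₁ → D₁ → C₁ → 0` and `0 → X₂ → D₂ → C₂ → 0` with `Dᵢ ∈ 𝒟`, `Cᵢ ∈ 𝒞`.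
In the long exact sequence `Ext¹(C₁, C₂) → Ext²(C₁, X₂) → Ext²(C₁, D₂)` the outer terms vanish
(rigidity of `𝒞`, the `Ext²` hypothesis), hence so does `Ext²(C₁, X₂)`. Then in
`Ext¹(D₁, X₂) → Ext¹(X₁, X₂) → Ext²(C₁, X₂)` the outer terms vanish (`X₂ ∈ 𝒟^⊥¹`).
As `Ext²` is encoded by dimension shifting, both exact sequences are proved by hand as
splitting arguments with pullbacks and pushouts of short exact sequences.
-/

namespace IsSES

variable {X Y Z : B} {f : X ⟶ Y} {g : Y ⟶ Z}

lemma w (h : IsSES f g) : f ≫ g = 0 := h.choose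

lemma mono_f (h : IsSES f g) : Mono f := h.choose_spec.mono_f

lemma epi_g (h : IsSES f g) : Epi g := h.choose_spec.epi_g

lemma exists_lift (h : IsSES f g) {T : B} (t : T ⟶ Y) (ht : t ≫ g = 0) :
    ∃ u : T ⟶ X, u ≫ f = t := by
  obtain ⟨w, hse⟩ := h
  have := hse.mono_f
  exact hse.exact.lift' t ht

lemma exists_desc (h : IsSES f g) {T : B} (t : Y ⟶ T) (ht : f ≫ t = 0) :
    ∃ u : Z ⟶ T, g ≫ u = t := by
  obtain ⟨w, hse⟩ := h
  have := hse.epi_g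
  exact hse.exact.desc' t ht

lemma of_exists_lift (w : f ≫ g = 0) [Mono f] [Epi g]
    (hl : ∀ {T : B} (t : T ⟶ Y), t ≫ g = 0 → ∃ u : T ⟶ X, u ≫ f = t) : IsSES f g :=
  ⟨w, .mk' (ShortComplex.exact_of_f_is_kernel _ (KernelFork.IsLimit.ofι' f w
    fun t ht => ⟨(hl t ht).choose, (hl t ht).choose_spec⟩)) ‹_› ‹_›⟩

lemma of_exists_desc (w : f ≫ g = 0) [Mono f] [Epi g]
    (hd : ∀ {T : B} (t : Y ⟶ T), f ≫ t = 0 → ∃ u : Z ⟶ T, g ≫ u = t) : IsSES f g :=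
  ⟨w, .mk' (ShortComplex.exact_of_g_is_cokernel _ (CokernelCofork.IsColimit.ofπ' g w
    fun t ht => ⟨(hd t ht).choose, (hd t ht).choose_spec⟩)) ‹_› ‹_›⟩

lemma exists_section_of_retraction (h : IsSES f g) {r : Y ⟶ X} (hr : f ≫ r = 𝟙 X) :
    ∃ s : Z ⟶ Y, s ≫ g = 𝟙 Z := by
  obtain ⟨w, hse⟩ := h
  exact ⟨_, (ShortComplex.Splitting.ofExactOfRetraction _ hse.exact r hr hse.epi_g).s_g⟩

lemma exists_retraction_of_section (h : IsSES f g) {s : Z ⟶ Y} (hs : s ≫ g = 𝟙 Z) :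
    ∃ r : Y ⟶ X, f ≫ r = 𝟙 X := by
  obtain ⟨w, hse⟩ := h
  exact ⟨_, (ShortComplex.Splitting.ofExactOfSection _ hse.exact s hs hse.mono_f).f_r⟩

end IsSES

lemma isSES_kernel {Y Z : B} (g : Y ⟶ Z) [Epi g] : IsSES (kernel.ι g) g :=
  IsSES.of_exists_lift (kernel.condition g) fun t ht =>
    ⟨kernel.lift g t ht, kernel.lift_ι _ _ _⟩

lemma isSES_pullback {X Y Z W : B} {f : X ⟶ Y} {g : Y ⟶ Z} (h : IsSES f g) (ψ : W ⟶ Z) :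
    IsSES (pullback.lift f 0 (by simp [h.w]) : X ⟶ pullback g ψ) (pullback.snd g ψ) := by
  have := h.mono_f
  have := h.epi_g
  have : Mono (pullback.lift f 0 (by simp [h.w]) : X ⟶ pullback g ψ) :=
    mono_of_mono_fac (pullback.lift_fst _ _ _)
  refine IsSES.of_exists_lift (pullback.lift_snd _ _ _) fun t ht => ?_
  obtain ⟨u, hu⟩ := h.exists_lift (t ≫ pullback.fst g ψ)
    (by simp [pullback.condition, reassoc_of% ht])
  exact ⟨u, pullback.hom_ext (by rw [assoc, pullback.lift_fst, hu])
    (by rw [assoc, pullback.lift_snd, comp_zero, ht])⟩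

lemma isSES_pushout {X Y Z W : B} {f : X ⟶ Y} {g : Y ⟶ Z} (h : IsSES f g) (φ : X ⟶ W) :
    IsSES (pushout.inr f φ) (pushout.desc g 0 (by simp [h.w]) : pushout f φ ⟶ Z) := by
  have := h.mono_f
  have := h.epi_g
  have : Epi (pushout.desc g 0 (by simp [h.w]) : pushout f φ ⟶ Z) :=
    epi_of_epi_fac (pushout.inl_desc _ _ _)
  refine IsSES.of_exists_desc (pushout.inr_desc _ _ _) fun t ht => ?_
  obtain ⟨u, hu⟩ := h.exists_desc (pushout.inl f φ ≫ t)
    (by rw [pushout.condition_assoc, ht, comp_zero])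
  exact ⟨u, pushout.hom_ext (by rw [pushout.inl_desc_assoc, hu])
    (by rw [pushout.inr_desc_assoc, zero_comp, ht])⟩

lemma isSES_pullback_fst {X Y Z Q : B} {f : X ⟶ Y} {g : Y ⟶ Z} (h : IsSES f g) (q : Q ⟶ Y)
    [Epi q] : IsSES (pullback.fst q f) (q ≫ g) := by
  have := h.mono_f
  have := h.epi_g
  refine IsSES.of_exists_lift (by simp [pullback.condition_assoc, h.w]) fun t ht => ?_
  obtain ⟨u, hu⟩ := h.exists_lift (t ≫ q) (by simpa using ht)
  exact ⟨pullback.lift t u hu.symm, pullback.lift_fst _ _ _⟩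

lemma Ext1Zero.exists_extension {K P C Y : B} {ι : K ⟶ P} {π : P ⟶ C} (h : IsSES ι π)
    (hCY : Ext1Zero C Y) (t : K ⟶ Y) : ∃ t' : P ⟶ Y, ι ≫ t' = t := by
  have hpush := isSES_pushout h t
  obtain ⟨s, hs⟩ := hCY _ _ hpush
  obtain ⟨r, hr⟩ := hpush.exists_retraction_of_section hs
  exact ⟨pushout.inl ι t ≫ r, by rw [pushout.condition_assoc, hr, comp_id]⟩

/-- The exact sequence `Hom(K, Y) → Hom(K, Y'') → Ext¹(K, Y') → Ext¹(K, Y)`. -/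
lemma Ext1Zero.of_isSES_right {K Y' Y Y'' : B} {a : Y' ⟶ Y} {b : Y ⟶ Y''} (hab : IsSES a b)
    (hKY : Ext1Zero K Y) (hlift : ∀ t : K ⟶ Y'', ∃ s : K ⟶ Y, s ≫ b = t) :
    Ext1Zero K Y' := by
  intro G j r hjr
  have := hab.mono_f
  obtain ⟨σ, hσ⟩ := hKY _ _ (isSES_pushout hjr a)
  obtain ⟨ρ, hρ⟩ := (isSES_pushout hjr a).exists_retraction_of_section hσ
  set m := pushout.inl j a ≫ ρ
  have hjm : j ≫ m = a := by rw [pushout.condition_assoc, hρ, comp_id]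
  obtain ⟨t, ht⟩ := hjr.exists_desc (m ≫ b) (by rw [reassoc_of% hjm, hab.w])
  obtain ⟨s, hs⟩ := hlift t
  obtain ⟨ρ', hρ'⟩ := hab.exists_lift (m - r ≫ s) (by simp [ht, hs])
  refine hjr.exists_section_of_retraction (r := ρ') ((cancel_mono a).mp ?_)
  rw [assoc, hρ', Preadditive.comp_sub, hjm, reassoc_of% hjr.w, zero_comp, sub_zero, id_comp]

/-- The exact sequence `Hom(M, Y) → Hom(A, Y) → Ext¹(N, Y) → Ext¹(M, Y)`. -/
lemma Ext1Zero.of_isSES_left {A M N Y : B} {f : A ⟶ M} {g : M ⟶ N} (hfg : IsSES f g)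
    (hMY : Ext1Zero M Y) (hext : ∀ t : A ⟶ Y, ∃ s : M ⟶ Y, f ≫ s = t) :
    Ext1Zero N Y := by
  intro E i p hip
  have := hfg.epi_g
  obtain ⟨σ, hσ⟩ := hMY _ _ (isSES_pullback hip g)
  set m := σ ≫ pullback.fst p g
  have hmp : m ≫ p = g := by rw [assoc, pullback.condition, reassoc_of% hσ]
  obtain ⟨t, ht⟩ := hip.exists_lift (f ≫ m) (by rw [assoc, hmp, hfg.w])
  obtain ⟨s, hs⟩ := hext t
  obtain ⟨u, hu⟩ := hfg.exists_desc (m - s ≫ i) (by simp [ht, reassoc_of% hs])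
  refine ⟨u, (cancel_epi g).mp ?_⟩
  rw [reassoc_of% hu, Preadditive.sub_comp, hmp, assoc, hip.w, comp_zero, sub_zero, comp_id]

lemma Ext2Zero.of_isSES {C Y' Y Y'' : B} {a : Y' ⟶ Y} {b : Y ⟶ Y''} (hab : IsSES a b)
    (hCY : Ext2Zero C Y) (hCY'' : Ext1Zero C Y'') : Ext2Zero C Y' := by
  intro K P ι π hP hιπ
  refine (hCY ι π hP hιπ).of_isSES_right hab fun t => ?_
  have := hab.epi_g
  obtain ⟨t', ht'⟩ := hCY''.exists_extension hιπ t
  exact ⟨ι ≫ Projective.factorThru t' b, by rw [assoc, Projective.factorThru_comp, ht']⟩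

/-- With `Q ↠ D` projective, the pullback of `Q ↠ D` along `X ↪ D` is both a syzygy of `C`
and an extension of `X` by `Ω D`. -/
lemma IsSES.ext1Zero_of_ext2Zero [EnoughProjectives B] {X D C Y : B} {a : X ⟶ D} {b : D ⟶ C}
    (hab : IsSES a b) (hDY : Ext1Zero D Y) (hCY : Ext2Zero C Y) : Ext1Zero X Y := by
  have hq := isSES_kernel (Projective.π D)
  have hsyz := hCY _ _ inferInstance (isSES_pullback_fst hab (Projective.π D))
  refine hsyz.of_isSES_left (isSES_pullback hq a) fun t => ?_
  obtain ⟨s, hs⟩ := hDY.exists_extension hq t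
  exact ⟨pullback.fst _ _ ≫ s, by rw [pullback.lift_fst_assoc, hs]⟩

theorem statement_18_general {B : Type u} [Category.{v} B] [Abelian B]
    [EnoughProjectives B]
    (C D : Set B) (hC : RCP C)
    (hExt2 : ∀ ⦃X⦄, X ∈ C → ∀ ⦃Y⦄, Y ∈ D → Ext2Zero X Y) :
    Rigid (CoCone D C ∩ rightPerp D) := by
  rintro X₁ ⟨⟨D₁, C₁, a₁, b₁, hD₁, hC₁, h₁⟩, -⟩
    X₂ ⟨⟨D₂, C₂, a₂, b₂, hD₂, hC₂, h₂⟩, hX₂⟩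
  have hC₁X₂ : Ext2Zero C₁ X₂ := (hExt2 hC₁ hD₂).of_isSES h₂ (hC.rigid hC₁ hC₂)
  exact h₁.ext1Zero_of_ext2Zero (hX₂ hD₁) hC₁X₂

/-- if `Ext²(𝒞,𝒟) = 0`, then the right `𝒟`-mutation
`𝒞' = CoCone(𝒟,𝒞) ∩ 𝒟^⊥¹` is rigid. -/
theorem statement_18 {B : Type u} [Category.{v} B] [Abelian B]
    [EnoughProjectives B] [EnoughInjectives B]
    (C D : Set B) (hC : RCP C) (hD : RCP D) (hDC : D ⊆ C)
    (hExt2 : ∀ ⦃X⦄, X ∈ C → ∀ ⦃Y⦄, Y ∈ D → Ext2Zero X Y) :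
    Rigid (CoCone D C ∩ rightPerp D) :=
  statement_18_general C D hC hExt2

end CotorsionPaper
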